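/- arXiv:2304.10501 — 8 statements merged into one kernel-verified Lean document; each statement's English description precedes it below -/
import Mathlib

section
/- Let G be a finite cyclic group with generating set {g_1, ..., g_m}. Then there exist integers r_1, ..., r_{m-1} such that g_m · g_1^{r_1} · g_2^{r_2} · ... · g_{m-1}^{r_{m-1}} generates G. -/
/-!
Write `G = ⟨t⟩` with `t` of order `n`. If `t ^ a` and `t ^ b` generate `G`, then `gcd a b` is
coprime to `n`, and so is `a + b * r` when `r` is the product of the primes of `n` not dividing
`a`; hence `x * y ^ r` generates `G`. Applied inside the cyclic subgroup `⟨x, y⟩` this gives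
`⟨x * y ^ r⟩ = ⟨x⟩ ⊔ ⟨y⟩` in general, and the generators `g i` are absorbed into `g (last m)`
one at a time.
-/

open Subgroup

theorem Nat.exists_coprime_add_mul {a b n : ℕ} (hn : n ≠ 0) (h : (gcd a b).Coprime n) :
    ∃ r, (a + b * r).Coprime n := by
  refine ⟨∏ p ∈ n.primeFactors with ¬ p ∣ a, p, Nat.coprime_of_dvd fun p hp hpab hpn => ?_⟩
  have hr : p ∣ ∏ p ∈ n.primeFactors with ¬ p ∣ a, p ↔ ¬ p ∣ a := by
    rw [hp.prime.dvd_finsetProd_iff]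
    refine ⟨fun ⟨q, hq, hpq⟩ => ?_, fun hpa => ⟨p, by simp [hp, hpn, hn, hpa], dvd_rfl⟩⟩
    rw [Finset.mem_filter, Nat.mem_primeFactors] at hq
    exact (Nat.prime_dvd_prime_iff_eq hp hq.1.1).mp hpq ▸ hq.2
  by_cases hpa : p ∣ a
  · have hpb : ¬ p ∣ b := fun hpb =>
      hp.ne_one (Nat.eq_one_of_dvd_coprimes h (Nat.dvd_gcd hpa hpb) hpn)
    have hpbr : p ∣ b * _ := (Nat.dvd_add_right hpa).mp hpab
    exact hr.mp ((hp.dvd_mul.mp hpbr).resolve_left hpb) hpa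
  · exact hpa ((Nat.dvd_add_left ((hr.mpr hpa).mul_left b)).mp hpab)

section

variable {G : Type*} [Group G]

theorem Subgroup.zpowers_pow_eq_top_iff {t : G} (ht : zpowers t = ⊤) {k : ℕ} :
    zpowers (t ^ k) = ⊤ ↔ k.Coprime (orderOf t) := by
  rw [Nat.Coprime, ← mem_zpowers_pow_iff]
  exact ⟨fun h => h ▸ mem_top t, fun h => eq_top_iff.mpr (ht ▸ zpowers_le.mpr h)⟩

theorem IsCyclic.exists_zpowers_mul_zpow_eq_top [Finite G] [IsCyclic G] {x y : G}
    (h : closure {x, y} = ⊤) : ∃ r : ℤ, zpowers (x * y ^ r) = ⊤ := by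
  obtain ⟨t, ht⟩ := IsCyclic.exists_generator (α := G)
  have ht : zpowers t = ⊤ := eq_top_iff' _ |>.mpr ht
  obtain ⟨a, rfl⟩ : ∃ a : ℕ, t ^ a = x := mem_powers_iff_mem_zpowers.mpr (ht ▸ mem_top x)
  obtain ⟨b, rfl⟩ : ∃ b : ℕ, t ^ b = y := mem_powers_iff_mem_zpowers.mpr (ht ▸ mem_top y)
  have hgcd : zpowers (t ^ Nat.gcd a b) = ⊤ := by
    refine eq_top_iff.mpr (h ▸ (closure_le _).mpr ?_)
    have hmem {k : ℕ} (hk : Nat.gcd a b ∣ k) : t ^ k ∈ zpowers (t ^ Nat.gcd a b) := by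
      obtain ⟨c, rfl⟩ := hk
      exact pow_mul t _ c ▸ npow_mem_zpowers _ c
    rintro _ (rfl | rfl)
    exacts [hmem (Nat.gcd_dvd_left a b), hmem (Nat.gcd_dvd_right a b)]
  obtain ⟨r, hr⟩ := Nat.exists_coprime_add_mul (orderOf_pos t).ne'
    ((zpowers_pow_eq_top_iff ht).mp hgcd)
  refine ⟨r, ?_⟩
  rw [zpow_natCast, ← pow_mul, ← pow_add]
  exact (zpowers_pow_eq_top_iff ht).mpr hr

theorem IsCyclic.exists_zpowers_mul_zpow_eq_sup [Finite G] [IsCyclic G] (x y : G) :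
    ∃ r : ℤ, zpowers (x * y ^ r) = zpowers x ⊔ zpowers y := by
  set H := closure {x, y}
  have hx : x ∈ H := subset_closure (Set.mem_insert x _)
  have hy : y ∈ H := subset_closure (Set.mem_insert_of_mem x rfl)
  have hgen : closure {(⟨x, hx⟩ : H), ⟨y, hy⟩} = ⊤ := map_injective H.subtype_injective <| by
    rw [MonoidHom.map_closure, Set.image_pair, ← MonoidHom.range_eq_map, range_subtype]
    rfl
  obtain ⟨r, hr⟩ := exists_zpowers_mul_zpow_eq_top hgen
  refine ⟨r, ?_⟩
  have hmap := congrArg (map H.subtype) hr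
  rw [MonoidHom.map_zpowers, ← MonoidHom.range_eq_map, range_subtype] at hmap
  have hH : H = zpowers x ⊔ zpowers y := by
    rw [zpowers_eq_closure, zpowers_eq_closure, ← Subgroup.closure_union, Set.singleton_union]
  exact hH ▸ hmap

theorem IsCyclic.exists_zpowers_mul_prod_zpow_eq_sup [Finite G] [IsCyclic G] (x : G) :
    ∀ {m : ℕ} (f : Fin m → G),
      ∃ r : Fin m → ℤ, zpowers (x * (List.ofFn fun i => f i ^ r i).prod) =
        zpowers x ⊔ closure (Set.range f)
  | 0, f => ⟨Fin.elim0, by simp⟩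
  | m + 1, f => by
    obtain ⟨r, hr⟩ := exists_zpowers_mul_prod_zpow_eq_sup x (Fin.init f)
    obtain ⟨s, hs⟩ := exists_zpowers_mul_zpow_eq_sup
      (x * (List.ofFn fun i => Fin.init f i ^ r i).prod) (f (Fin.last m))
    refine ⟨Fin.snoc r s, ?_⟩
    rw [List.ofFn_succ', List.prod_concat, ← mul_assoc]
    simp only [Fin.snoc_castSucc, Fin.snoc_last]
    refine hs.trans ?_
    rw [hr, sup_assoc, zpowers_eq_closure (f _), ← Subgroup.closure_union,
      Set.union_singleton, ← Fin.range_snoc, Fin.snoc_init_self]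

end

/-- If `G` is a finite cyclic group generated by `g_1, …, g_{m+1}`, then there are integers
`r_1, …, r_m` such that `g_{m+1} * g_1^{r_1} * ⋯ * g_m^{r_m}` generates `G`. -/
theorem stmt1 {G : Type*} [Group G] [Finite G] [IsCyclic G]
    (m : ℕ) (g : Fin (m + 1) → G)
    (hgen : Subgroup.closure (Set.range g) = ⊤) :
    ∃ r : Fin m → ℤ,
      Subgroup.zpowers
        (g (Fin.last m) * (List.ofFn fun i : Fin m => g i.castSucc ^ r i).prod) = ⊤ := by
  obtain ⟨r, hr⟩ := IsCyclic.exists_zpowers_mul_prod_zpow_eq_sup (g (Fin.last m)) (Fin.init g)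
  refine ⟨r, hr.trans ?_⟩
  rw [← hgen, zpowers_eq_closure, ← Subgroup.closure_union, ← Set.insert_eq, ← Fin.range_snoc,
    Fin.snoc_init_self]
end

section
/- Let F be a free group of finite rank d with basis {x_1,...,x_d}, let c be a positive integer, and let φ : F → ℤ/cℤ be a surjective homomorphism. Then there exists an automorphism λ of F such that φ(λ(x_1)) generates ℤ/cℤ. -/
/-!
Put `a = φ(x₁)`. The image under `φ` of the subgroup generated by `x₂, …, x_d` is cyclic, say
`⟨b⟩`, and `a, b` generate `ℤ/cℤ`, i.e. `a` and `b` are coprime in the ring `ℤ/cℤ`. Modulo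
`k = gcd(b, c)` the element `a` is then a unit, and since `(ℤ/cℤ)ˣ → (ℤ/kℤ)ˣ` is surjective, some
`a + t b` is a unit of `ℤ/cℤ`, i.e. a generator. Writing `t b = φ(v)` with `v` in that subgroup,
the Nielsen transvection `x₁ ↦ x₁ v` fixing the other basis elements is the required automorphism.
-/

open Subgroup

namespace ZMod

theorem exists_isUnit_add_mul_of_isCoprime {c : ℕ} [NeZero c] {a b : ZMod c}
    (h : IsCoprime a b) : ∃ t : ZMod c, IsUnit (a + t * b) := by
  set k := Nat.gcd b.val c
  have hk : k ∣ c := Nat.gcd_dvd_right _ _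
  let π := castHom hk (ZMod k)
  have hπ : ∀ x : ZMod c, π x = 0 ↔ k ∣ x.val := fun x => by
    rw [castHom_apply, ← natCast_val, natCast_eq_zero_iff]
  have hb : π b = 0 := (hπ b).2 (Nat.gcd_dvd_left _ _)
  obtain ⟨v, hv⟩ := isCoprime_zero_right.1 (hb ▸ h.map π)
  obtain ⟨u, hu⟩ := unitsMap_surjective hk v
  obtain ⟨m, hm⟩ : k ∣ ((u : ZMod c) - a).val := by
    rw [← hπ, map_sub, ← hv, ← hu]
    exact sub_eq_zero.2 rfl
  have hkb : (k : ZMod c) = b * Nat.gcdA b.val c := by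
    have := congrArg (Int.cast : ℤ → ZMod c) (Nat.gcd_eq_gcd_ab b.val c)
    push_cast at this
    simpa using this
  refine ⟨m * Nat.gcdA b.val c, ?_⟩
  convert u.isUnit
  calc a + m * Nat.gcdA b.val c * b = a + ((k * m : ℕ) : ZMod c) := by
        push_cast; rw [hkb]; ring
    _ = u := by rw [← hm, natCast_val, cast_id', id, add_sub_cancel]

theorem zpowers_ofAdd_eq_top_of_isUnit {c : ℕ} [NeZero c] {u : ZMod c} (hu : IsUnit u) :
    zpowers (Multiplicative.ofAdd u) = ⊤ := by
  refine (eq_top_iff' _).2 fun y => ⟨((y.toAdd * hu.unit⁻¹ : ZMod c).val : ℤ), ?_⟩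
  apply Multiplicative.toAdd.injective
  rw [toAdd_zpow, natCast_zsmul, nsmul_eq_mul, natCast_zmod_val, toAdd_ofAdd, mul_assoc,
    IsUnit.val_inv_mul, mul_one]

theorem exists_zpowers_mul_eq_top_of_sup_eq_top {c : ℕ} [NeZero c]
    {a : Multiplicative (ZMod c)} {H : Subgroup (Multiplicative (ZMod c))}
    (h : zpowers a ⊔ H = ⊤) : ∃ g ∈ H, zpowers (a * g) = ⊤ := by
  obtain ⟨b, rfl⟩ := (H.isCyclic_iff_exists_zpowers_eq_top).1 inferInstance
  obtain ⟨_, ⟨m, rfl⟩, _, ⟨n, rfl⟩, hmn⟩ :=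
    mem_sup.1 (h ▸ mem_top (Multiplicative.ofAdd (1 : ZMod c)))
  have hcop : IsCoprime a.toAdd b.toAdd :=
    ⟨m, n, by simpa [zsmul_eq_mul] using congrArg Multiplicative.toAdd hmn⟩
  obtain ⟨t, ht⟩ := exists_isUnit_add_mul_of_isCoprime hcop
  refine ⟨b ^ t.val, pow_mem (mem_zpowers b) _, ?_⟩
  convert zpowers_ofAdd_eq_top_of_isUnit ht
  apply Multiplicative.toAdd.injective
  simp [nsmul_eq_mul]

end ZMod

namespace FreeGroup

variable {α : Type*}

theorem zpowers_of_sup_closure_of_compl (a : α) :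
    zpowers (of a) ⊔ closure (of '' {a}ᶜ) = ⊤ := by
  rw [zpowers_eq_closure, ← Subgroup.closure_union, ← Set.image_singleton, ← Set.image_union,
    Set.union_compl_self, Set.image_univ, closure_range_of]

variable [DecidableEq α]

def transvectionHom (a : α) (v : FreeGroup α) : FreeGroup α →* FreeGroup α :=
  lift (Function.update of a (of a * v))

@[simp]
theorem transvectionHom_of_self (a : α) (v : FreeGroup α) :
    transvectionHom a v (of a) = of a * v := by
  simp [transvectionHom]

theorem transvectionHom_of_of_ne {a i : α} (v : FreeGroup α) (h : i ≠ a) :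
    transvectionHom a v (of i) = of i := by
  simp [transvectionHom, h]

theorem transvectionHom_eqOn_closure (a : α) (v : FreeGroup α) :
    Set.EqOn (transvectionHom a v) (MonoidHom.id _) (closure (of '' {a}ᶜ)) :=
  MonoidHom.eqOn_closure <| Set.forall_mem_image.2 fun _ hi => transvectionHom_of_of_ne v hi

theorem transvectionHom_inv_comp {a : α} {v : FreeGroup α} (hv : v ∈ closure (of '' {a}ᶜ)) :
    (transvectionHom a v⁻¹).comp (transvectionHom a v) = MonoidHom.id _ := by
  refine ext_hom _ _ fun i => ?_
  by_cases hi : i = a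
  · subst hi
    simp [transvectionHom_eqOn_closure i v⁻¹ hv]
  · simp [transvectionHom_of_of_ne _ hi]

def transvection (a : α) (v : FreeGroup α) (hv : v ∈ closure (of '' {a}ᶜ)) :
    FreeGroup α ≃* FreeGroup α :=
  (transvectionHom a v).toMulEquiv (transvectionHom a v⁻¹) (transvectionHom_inv_comp hv)
    (by simpa using transvectionHom_inv_comp (inv_mem hv))

@[simp]
theorem transvection_of_self (a : α) (v : FreeGroup α) (hv : v ∈ closure (of '' {a}ᶜ)) :
    transvection a v hv (of a) = of a * v :=
  transvectionHom_of_self a v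

end FreeGroup

/-- Let `F` be a free group of finite rank `d` with basis `x_1, …, x_d` and let
`φ : F → ℤ/cℤ` be a surjective homomorphism (`c ≥ 1`). Then there is an automorphism `λ`
of `F` such that `φ(λ(x_1))` generates `ℤ/cℤ`. -/
theorem stmt2 (d : ℕ) (hd : 0 < d) (c : ℕ) (hc : 0 < c)
    (φ : FreeGroup (Fin d) →* Multiplicative (ZMod c))
    (hφ : Function.Surjective φ) :
    ∃ lam : FreeGroup (Fin d) ≃* FreeGroup (Fin d),
      Subgroup.zpowers (φ (lam (FreeGroup.of ⟨0, hd⟩))) = ⊤ := by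
  have : NeZero c := ⟨hc.ne'⟩
  set a : Fin d := ⟨0, hd⟩
  have hsup : zpowers (φ (FreeGroup.of a)) ⊔ (closure (FreeGroup.of '' {a}ᶜ)).map φ = ⊤ := by
    rw [← MonoidHom.map_zpowers, ← Subgroup.map_sup, FreeGroup.zpowers_of_sup_closure_of_compl,
      ← MonoidHom.range_eq_map, MonoidHom.range_eq_top.2 hφ]
  obtain ⟨_, ⟨v, hv, rfl⟩, hgen⟩ := ZMod.exists_zpowers_mul_eq_top_of_sup_eq_top hsup
  exact ⟨FreeGroup.transvection a v hv, by rwa [FreeGroup.transvection_of_self, map_mul]⟩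
end

section
/- Let f ∈ ℤ[X]. The set S(f) of primes p such that f has a root modulo p is finite if and only if f is a nonzero constant polynomial. -/
/-!
If `f(0) = c ≠ 0`, then for every `K ≠ 0` and `m` we have `f(cKm) = c · t` with
`t ≡ 1 (mod K)`. Since a non-constant `f` takes the values `±c` only finitely often, some `m`
gives `t ≠ ±1`, and a prime factor of `t` is then a prime dividing a value of `f` but not `K`.
Taking `K = N!` produces such primes above every bound `N`. If instead `f(0) = 0`, every prime
divides `f(0)`.
-/

open Polynomial

namespace Polynomial

/-- The set `S(f)`. -/
def primeDivisorsOfValues (f : ℤ[X]) : Set ℕ :=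
  {p | p.Prime ∧ ∃ n : ℤ, (p : ℤ) ∣ f.eval n}

theorem finite_setOf_eval_eq {R : Type*} [CommRing R] [IsDomain R] {f : R[X]}
    (hf : 0 < f.natDegree) (a : R) : {x | f.eval x = a}.Finite := by
  have hfa : f - C a ≠ 0 := fun h => by
    rw [sub_eq_zero.mp h, natDegree_C] at hf
    exact hf.false
  simpa [sub_eq_zero] using finite_setOfPred_isRoot hfa

theorem eval_coeff_zero_mul {R : Type*} [CommRing R] (f : R[X]) (y : R) :
    f.eval (f.coeff 0 * y) = f.coeff 0 * (1 + y * f.divX.eval (f.coeff 0 * y)) := by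
  have hf := divX_mul_X_add f
  set c := f.coeff 0
  conv_lhs => rw [← hf]
  simp only [eval_add, eval_mul, eval_X, eval_C]
  ring

theorem infinite_primeDivisorsOfValues_of_isRoot {f : ℤ[X]} {n : ℤ} (hn : f.IsRoot n) :
    (primeDivisorsOfValues f).Infinite :=
  Nat.infinite_setOfPred_prime.mono fun _ hp => ⟨hp, n, hn.eq_zero ▸ dvd_zero _⟩

theorem exists_prime_not_dvd_mem_primeDivisorsOfValues {f : ℤ[X]} (hf : 0 < f.natDegree)
    (hc : f.coeff 0 ≠ 0) {K : ℤ} (hK : K ≠ 0) :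
    ∃ p ∈ primeDivisorsOfValues f, ¬ (p : ℤ) ∣ K := by
  set c := f.coeff 0
  have hfin : ((fun m => c * (K * m)) ⁻¹' ({x | f.eval x = c} ∪ {x | f.eval x = -c})).Finite :=
    ((finite_setOf_eval_eq hf c).union (finite_setOf_eval_eq hf (-c))).preimage
      ((mul_right_injective₀ hc).comp (mul_right_injective₀ hK)).injOn
  obtain ⟨m, hm⟩ := hfin.infinite_compl.nonempty
  set t := 1 + K * m * f.divX.eval (c * (K * m))
  have hft : f.eval (c * (K * m)) = c * t := eval_coeff_zero_mul f _
  have ht : t.natAbs ≠ 1 := fun h => by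
    apply hm
    rcases Int.natAbs_eq_iff.mp h with h | h
    · exact Or.inl (by simp [hft, h])
    · exact Or.inr (by simp [hft, h])
  obtain ⟨p, hp, hpt⟩ := Nat.exists_prime_and_dvd ht
  replace hpt : (p : ℤ) ∣ t := Int.natCast_dvd.mpr hpt
  refine ⟨p, ⟨hp, c * (K * m), hft ▸ hpt.mul_left c⟩, fun hpK => hp.one_lt.ne' ?_⟩
  have hp1 : (p : ℤ) ∣ 1 := by
    simpa [t] using dvd_sub hpt ((hpK.mul_right m).mul_right (f.divX.eval (c * (K * m))))
  exact_mod_cast Int.eq_one_of_dvd_one (Int.natCast_nonneg p) hp1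

/-- Schur's theorem. -/
theorem infinite_primeDivisorsOfValues {f : ℤ[X]} (hf : 0 < f.natDegree) :
    (primeDivisorsOfValues f).Infinite := by
  by_cases hc : f.coeff 0 = 0
  · exact infinite_primeDivisorsOfValues_of_isRoot (n := 0)
      (by simpa [coeff_zero_eq_eval_zero] using hc)
  refine Set.infinite_of_forall_exists_gt fun N => ?_
  obtain ⟨p, hpS, hpN⟩ := exists_prime_not_dvd_mem_primeDivisorsOfValues hf hc
    (Int.natCast_ne_zero.mpr N.factorial_ne_zero)
  refine ⟨p, hpS, not_le.mp fun hle => hpN ?_⟩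
  exact_mod_cast (hpS.1.dvd_factorial).mpr hle

theorem finite_primeDivisorsOfValues_C {a : ℤ} (ha : a ≠ 0) :
    (primeDivisorsOfValues (C a)).Finite :=
  a.natAbs.primeFactors.finite_toSet.subset fun p ⟨hp, _, hpa⟩ =>
    Nat.mem_primeFactors.mpr ⟨hp, Int.natCast_dvd.mp (by simpa using hpa), by simpa using ha⟩

end Polynomial

/-- For `f ∈ ℤ[X]`, the set of primes `p` such that `f` has a root modulo `p` is finite
if and only if `f` is a nonzero constant polynomial. -/
theorem stmt3 (f : Polynomial ℤ) :
    {p : ℕ | p.Prime ∧ ∃ n : ℤ, (p : ℤ) ∣ f.eval n}.Finite ↔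
      ∃ a : ℤ, a ≠ 0 ∧ f = Polynomial.C a := by
  change (primeDivisorsOfValues f).Finite ↔ _
  constructor
  · intro hS
    refine ⟨f.coeff 0, fun h0 => ?_, eq_C_of_natDegree_eq_zero ?_⟩
    · exact infinite_primeDivisorsOfValues_of_isRoot (n := 0)
        (by simpa [coeff_zero_eq_eval_zero] using h0) hS
    · by_contra hdeg
      exact infinite_primeDivisorsOfValues (Nat.pos_of_ne_zero hdeg) hS
  · rintro ⟨a, ha, rfl⟩
    exact finite_primeDivisorsOfValues_C ha
end

section
/- Let f ∈ ℤ[X] be a nonconstant polynomial with nonzero constant term a_0. For every nonzero integer t, there exist a prime p with gcd(t, p) = 1 and an integer n such that f(n) ≡ 0 mod p. -/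
/-!
Write `a = f(0)`. Since `X ∣ f - a`, every value of `f` at a multiple `a * t * x` has the form
`a * N` with `N ≡ 1 (mod t)`, so every prime factor of `N` is prime to `t`. As `x ↦ f(a t x)` is
nonconstant, it avoids the values `±a` for some `x`, and then `N ≠ ±1` has a prime factor.
-/

open Polynomial

theorem Polynomial.finite_preimage_eval {R : Type*} [CommRing R] [IsDomain R] {p : R[X]}
    (hp : 0 < p.natDegree) {s : Set R} (hs : s.Finite) : (p.eval ⁻¹' s).Finite := by
  rw [← Set.biUnion_preimage_singleton]
  refine hs.biUnion fun a _ => ?_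
  have hpa : p ≠ C a := fun h => by simp [h] at hp
  rw [preimage_eval_singleton hpa]
  exact rootSet_finite _ _

theorem Polynomial.exists_eval_notMem {R : Type*} [CommRing R] [IsDomain R] [Infinite R]
    {p : R[X]} (hp : 0 < p.natDegree) {s : Set R} (hs : s.Finite) : ∃ x, p.eval x ∉ s :=
  (finite_preimage_eval hp hs).infinite_compl.nonempty

theorem Polynomial.exists_eval_coeff_zero_mul {R : Type*} [CommRing R] (f : R[X]) (y : R) :
    ∃ k, f.eval (f.coeff 0 * y) = f.coeff 0 * (1 + y * k) := by
  obtain ⟨k, hk⟩ := sub_dvd_eval_sub (f.coeff 0 * y) 0 f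
  refine ⟨k, ?_⟩
  rw [← coeff_zero_eq_eval_zero] at hk
  linear_combination hk

theorem Int.exists_prime_gcd_eq_one_dvd_of_modEq_one {t N : ℤ} (hN : N ≡ 1 [ZMOD t])
    (hN1 : N.natAbs ≠ 1) : ∃ p : ℕ, p.Prime ∧ Int.gcd t p = 1 ∧ (p : ℤ) ∣ N := by
  obtain ⟨q, hq, hqN⟩ := Int.exists_prime_and_dvd hN1
  have hpN : (q.natAbs : ℤ) ∣ N := Int.natAbs_dvd.mpr hqN
  refine ⟨q.natAbs, Int.prime_iff_natAbs_prime.mp hq, ?_, hpN⟩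
  have hgcd_one : (Int.gcd t q.natAbs : ℤ) ∣ 1 := by
    have hdvd_N : (Int.gcd t q.natAbs : ℤ) ∣ N := (Int.gcd_dvd_right _ _).trans hpN
    have hdvd_sub : (Int.gcd t q.natAbs : ℤ) ∣ N - 1 :=
      (Int.gcd_dvd_left _ _).trans (Int.ModEq.dvd hN.symm)
    simpa using dvd_sub hdvd_N hdvd_sub
  exact_mod_cast Int.eq_one_of_dvd_one (by positivity) hgcd_one

/-- Let `f ∈ ℤ[X]` be nonconstant with nonzero constant term. Then for every nonzero
integer `t` there exist a prime `p` coprime to `t` and an integer `n` with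
`f(n) ≡ 0 mod p`. -/
theorem stmt4 (f : Polynomial ℤ) (hdeg : 0 < f.natDegree) (h0 : f.coeff 0 ≠ 0)
    (t : ℤ) (ht : t ≠ 0) :
    ∃ (p : ℕ) (n : ℤ), p.Prime ∧ Int.gcd t (p : ℤ) = 1 ∧ (p : ℤ) ∣ f.eval n := by
  have hcomp : 0 < (f.comp (C (f.coeff 0 * t) * X)).natDegree := by
    rwa [natDegree_comp, natDegree_C_mul_X _ (mul_ne_zero h0 ht), mul_one]
  obtain ⟨x, hx⟩ := exists_eval_notMem hcomp (Set.toFinite {f.coeff 0, -f.coeff 0})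
  obtain ⟨k, hk⟩ := f.exists_eval_coeff_zero_mul (t * x)
  set N := 1 + t * x * k
  simp only [eval_comp, eval_mul, eval_C, eval_X] at hx
  rw [mul_assoc, hk] at hx
  have hN : N ≡ 1 [ZMOD t] := (Int.modEq_iff_dvd.mpr ⟨x * k, by simp only [N]; ring⟩).symm
  have hN1 : N.natAbs ≠ 1 := fun h => hx <| by
    rcases Int.natAbs_eq_iff.mp h with h | h <;> simp [h]
  obtain ⟨p, hp, hpt, hpN⟩ := Int.exists_prime_gcd_eq_one_dvd_of_modEq_one hN hN1
  exact ⟨p, f.coeff 0 * (t * x), hp, hpt, hk ▸ hpN.mul_left _⟩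
end

section
/- A finite group G is primitive and supersolvable if and only if G is isomorphic to a semidirect product (ℤ/pℤ) ⋊ C for some prime p and some subgroup C of Aut(ℤ/pℤ). -/
/-- A finite group is primitive if it has a maximal subgroup with trivial core. -/
def IsPrimitiveGroup (G : Type*) [Group G] : Prop :=
  ∃ M : Subgroup G, IsCoatom M ∧ M.normalCore = ⊥

/-- A group is supersolvable if it has a chain `⊥ = H_0 ≤ H_1 ≤ ⋯ ≤ H_k = ⊤` of subgroups,
each normal in `G`, with all successive factors cyclic (i.e. `H_{i+1} = H_i ⊔ ⟨g⟩` for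
some `g`). -/
def IsSupersolvableGroup (G : Type*) [Group G] : Prop :=
  ∃ (k : ℕ) (H : Fin (k + 1) → Subgroup G),
    H 0 = ⊥ ∧ H (Fin.last k) = ⊤ ∧
    (∀ i : Fin (k + 1), (H i).Normal) ∧
    (∀ i : Fin k, ∃ g : G, H i.succ = H i.castSucc ⊔ Subgroup.zpowers g)

def addAutToMulAut (A : Type*) [AddGroup A] : Multiplicative (AddAut A) →* MulAut (Multiplicative A) where
  toFun f := AddEquiv.toMultiplicative f.toAdd
  map_one' := rfl
  map_mul' _ _ := rfl

/-- The natural action of `C ≤ Aut(ℤ/pℤ) ≅ (ℤ/pℤ)ˣ` on `ℤ/pℤ`. -/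
def unitAct (p : ℕ) : (ZMod p)ˣ →* MulAut (Multiplicative (ZMod p)) :=
  (addAutToMulAut _).comp (DistribMulAction.toAddAut (ZMod p)ˣ (ZMod p))

/-!
A supersolvable group has a normal subgroup `N` of prime order `p`: take the first nontrivial
term `⟨g⟩` of a cyclic series and the subgroup of order `p` inside it. If `M` is a core-free
maximal subgroup then `N ⊄ M`, so `N` is a normal complement of `M` and `G ≅ N ⋊ M`. The action
of `M` on `N ≅ ℤ/pℤ` by conjugation is faithful, since its kernel `M ∩ C_G(N)` is normalized by
both `M` and `N`, hence normal in `G` and contained in the core of `M`. So `M` embeds into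
`Aut(ℤ/pℤ) ≅ (ℤ/pℤ)ˣ`.

Conversely, in `ℤ/pℤ ⋊ C` the complement `C` has prime index `p`, hence is maximal, and it is
core-free because `C` acts faithfully; `1 ◁ ℤ/pℤ ◁ ℤ/pℤ ⋊ C` has cyclic factors because `C`,
a subgroup of the cyclic group `(ℤ/pℤ)ˣ`, is cyclic.
-/

open Subgroup

section Transport

variable {G H : Type*} [Group G] [Group H]

theorem Subgroup.normalCore_comap_of_surjective {f : G →* H} (hf : Function.Surjective f)
    (M : Subgroup H) : (M.comap f).normalCore = M.normalCore.comap f := by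
  refine le_antisymm ?_ (normal_le_normalCore.mpr (comap_mono M.normalCore_le))
  have := (normalCore_normal (M.comap f)).map f hf
  rw [← map_le_iff_le_comap]
  exact normal_le_normalCore.mpr (map_le_iff_le_comap.mpr (normalCore_le _))

theorem IsPrimitiveGroup.of_mulEquiv (e : G ≃* H) (h : IsPrimitiveGroup G) :
    IsPrimitiveGroup H := by
  obtain ⟨M, hM, hcore⟩ := h
  refine ⟨M.comap e.symm, isCoatom_comap_of_surjective e.symm.surjective hM, ?_⟩
  rw [normalCore_comap_of_surjective e.symm.surjective, hcore, MonoidHom.comap_bot,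
    MonoidHom.ker_eq_bot_iff]
  exact e.symm.injective

theorem IsSupersolvableGroup.of_surjective {f : G →* H} (hf : Function.Surjective f)
    (h : IsSupersolvableGroup G) : IsSupersolvableGroup H := by
  obtain ⟨k, S, h0, htop, hnormal, hstep⟩ := h
  refine ⟨k, fun i => (S i).map f, by simp only [h0, Subgroup.map_bot], ?_,
    fun i => (hnormal i).map f hf, fun i => ?_⟩
  · simp only [htop, ← MonoidHom.range_eq_map, MonoidHom.range_eq_top_of_surjective f hf]
  · obtain ⟨g, hg⟩ := hstep i
    exact ⟨f g, by simp only [hg, Subgroup.map_sup, MonoidHom.map_zpowers]⟩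

end Transport

section Supersolvable

variable {G : Type*} [Group G]

theorem IsSupersolvableGroup.of_zpowers_sup_zpowers (a b : G) [(zpowers a).Normal]
    (h : zpowers a ⊔ zpowers b = ⊤) : IsSupersolvableGroup G := by
  refine ⟨2, ![⊥, zpowers a, ⊤], rfl, rfl, fun i => ?_, fun i => ?_⟩
  · fin_cases i <;> dsimp <;> infer_instance
  · fin_cases i
    · exact ⟨a, (bot_sup_eq _).symm⟩
    · exact ⟨b, h.symm⟩

theorem IsSupersolvableGroup.exists_ne_one_zpowers_normal [Nontrivial G]
    (h : IsSupersolvableGroup G) : ∃ g : G, g ≠ 1 ∧ (zpowers g).Normal := by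
  obtain ⟨k, S, h0, htop, hnormal, hstep⟩ := h
  suffices ∀ i, S i = ⊥ ∨ ∃ g : G, g ≠ 1 ∧ (zpowers g).Normal from
    (this (Fin.last k)).resolve_left (htop ▸ top_ne_bot)
  refine Fin.induction (.inl h0) fun i ih => ?_
  refine ih.elim (fun hi => ?_) .inr
  obtain ⟨g, hg⟩ := hstep i
  rw [hi, bot_sup_eq] at hg
  by_cases hg1 : g = 1
  · exact .inl (by rw [hg, hg1, zpowers_one_eq_bot])
  · exact .inr ⟨g, hg1, hg ▸ hnormal i.succ⟩

theorem Subgroup.Normal.zpowers_zpow {g : G} (h : (zpowers g).Normal) (m : ℤ) :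
    (zpowers (g ^ m)).Normal := by
  constructor
  rintro - ⟨j, rfl⟩ c
  -- conjugation by `c` acts on the normal cyclic subgroup `⟨g⟩` as a power map `x ↦ x ^ k`
  obtain ⟨k, hk⟩ := mem_zpowers_iff.mp (h.conj_mem g (mem_zpowers g) c)
  refine ⟨j * k, ?_⟩
  calc (g ^ m) ^ (j * k) = (g ^ k) ^ (m * j) := by rw [← zpow_mul, ← zpow_mul]; ring_nf
    _ = c * (g ^ m) ^ j * c⁻¹ := by rw [hk, conj_zpow, ← zpow_mul]

theorem IsSupersolvableGroup.exists_normal_prime_card [Finite G] [Nontrivial G]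
    (h : IsSupersolvableGroup G) : ∃ N : Subgroup G, N.Normal ∧ (Nat.card N).Prime := by
  obtain ⟨g, hg1, hg⟩ := h.exists_ne_one_zpowers_normal
  set p := (orderOf g).minFac
  have hp : p.Prime := Nat.minFac_prime (orderOf_eq_one_iff.not.mpr hg1)
  refine ⟨zpowers (g ^ (orderOf g / p)), by exact_mod_cast hg.zpowers_zpow (orderOf g / p : ℕ), ?_⟩
  rwa [Nat.card_zpowers, orderOf_pow_orderOf_div (orderOf_pos g).ne' (Nat.minFac_dvd _)]

end Supersolvable

section Primitive

variable {G : Type*} [Group G] {N M : Subgroup G} [N.Normal]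

theorem Subgroup.inf_centralizer_le_normalCore (hNM : N ⊔ M = ⊤) :
    M ⊓ centralizer N ≤ M.normalCore := by
  have : (M ⊓ centralizer N).Normal := by
    rw [← normalizer_eq_top_iff, eq_top_iff, ← hNM, sup_le_iff]
    constructor
    · exact (le_centralizer_iff.mp inf_le_right).trans (centralizer_le_normalizer _)
    · refine le_trans ?_ inf_normalizer_le_normalizer_inf
      exact le_inf le_normalizer ((centralizer (N : Set G)).normalizer_eq_top ▸ le_top)
  exact normal_le_normalCore.mpr inf_le_left

theorem Subgroup.injective_normalizerMonoidHom_comp_inclusion (hNM : N ⊔ M = ⊤)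
    (hcore : M.normalCore = ⊥) (h : M ≤ normalizer N) :
    Function.Injective (N.normalizerMonoidHom.comp (inclusion h)) := by
  rw [injective_iff_map_eq_one]
  intro m hm
  have hcent : inclusion h m ∈ N.normalizerMonoidHom.ker := hm
  rw [normalizerMonoidHom_ker, mem_subgroupOf] at hcent
  have := inf_centralizer_le_normalCore hNM ⟨m.2, hcent⟩
  rw [hcore, mem_bot] at this
  exact Subtype.ext this

theorem Subgroup.isComplement'_of_isCoatom (hN : (Nat.card N).Prime) (hM : IsCoatom M)
    (hcore : M.normalCore = ⊥) : N.IsComplement' M := by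
  have hNM : ¬ N ≤ M := fun h => by
    have hbot := normal_le_normalCore.mpr h
    rw [hcore, le_bot_iff] at hbot
    rw [hbot, card_bot] at hN
    exact Nat.not_prime_one hN
  have : Finite N := Nat.finite_of_card_ne_zero hN.ne_zero
  have hdisj : Disjoint N M := by
    rw [disjoint_iff]
    rcases hN.eq_one_or_self_of_dvd _ (card_dvd_of_le (inf_le_left : N ⊓ M ≤ N)) with h1 | hp
    · exact card_eq_one.mp h1
    · have hinf : N ⊓ M = N := eq_of_le_of_card_ge inf_le_left hp.ge
      exact absurd (hinf ▸ inf_le_right) hNM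
  have hsup : N ⊔ M = ⊤ := hM.2 _ (right_lt_sup.mpr hNM)
  exact isComplement'_of_disjoint_and_mul_eq_univ hdisj (by rw [← normal_mul, hsup, coe_top])

end Primitive

theorem Subgroup.isCoatom_of_index_prime {G : Type*} [Group G] {H : Subgroup G}
    (h : H.index.Prime) : IsCoatom H := by
  refine ⟨fun hH => Nat.not_prime_one (by rwa [hH, index_top] at h), fun K hK => ?_⟩
  rcases h.eq_one_or_self_of_dvd _ (index_dvd_of_le hK.le) with h1 | hp
  · exact index_eq_one.mp h1
  · have hrel := relIndex_mul_index hK.le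
    rw [hp, Nat.mul_eq_right h.ne_zero, relIndex_eq_one] at hrel
    exact absurd hrel hK.not_ge

namespace SemidirectProduct

variable {N K : Type*} [Group N] [Group K] {φ : K →* MulAut N}

theorem isComplement'_range_inl_range_inr :
    (inl : N →* N ⋊[φ] K).range.IsComplement' (inr : K →* N ⋊[φ] K).range := by
  refine isComplement'_of_disjoint_and_mul_eq_univ ?_ ?_
  · rw [disjoint_iff, eq_bot_iff]
    rintro x ⟨⟨n, rfl⟩, ⟨k, hk⟩⟩
    have : n = 1 := (congrArg left hk).symm
    rw [this, map_one]
    exact one_mem _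
  · exact Set.eq_univ_of_forall fun x =>
      ⟨_, ⟨x.left, rfl⟩, _, ⟨x.right, rfl⟩, inl_left_mul_inr_right x⟩

theorem index_range_inr : (inr : K →* N ⋊[φ] K).range.index = Nat.card N := by
  rw [isComplement'_range_inl_range_inr.index_eq_card]
  exact Nat.card_congr (MonoidHom.ofInjective inl_injective).toEquiv.symm

theorem normalCore_range_inr (hφ : Function.Injective φ) :
    (inr : K →* N ⋊[φ] K).range.normalCore = ⊥ := by
  rw [eq_bot_iff]
  intro x hx
  obtain ⟨k, rfl⟩ := normalCore_le _ hx
  suffices φ k = 1 by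
    rw [hφ (this.trans (map_one φ).symm), map_one]
    exact one_mem _
  ext n
  obtain ⟨k', hk'⟩ := hx (inl n⁻¹)
  have hleft : 1 = n⁻¹ * φ k n := by simpa using congrArg left hk'
  simpa using (inv_mul_eq_one.mp hleft.symm).symm

theorem isPrimitiveGroup (hN : (Nat.card N).Prime) (hφ : Function.Injective φ) :
    IsPrimitiveGroup (N ⋊[φ] K) :=
  ⟨_, isCoatom_of_index_prime (by rwa [index_range_inr]), normalCore_range_inr hφ⟩

theorem isSupersolvableGroup [IsCyclic N] [IsCyclic K] : IsSupersolvableGroup (N ⋊[φ] K) := by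
  obtain ⟨a, ha⟩ := isCyclic_iff_exists_zpowers_eq_top.mp ‹IsCyclic N›
  obtain ⟨b, hb⟩ := isCyclic_iff_exists_zpowers_eq_top.mp ‹IsCyclic K›
  have hinl : zpowers (inl a : N ⋊[φ] K) = inl.range := by
    rw [← MonoidHom.map_zpowers, ha, ← MonoidHom.range_eq_map]
  have hinr : zpowers (inr b : N ⋊[φ] K) = inr.range := by
    rw [← MonoidHom.map_zpowers, hb, ← MonoidHom.range_eq_map]
  have : (zpowers (inl a : N ⋊[φ] K)).Normal := by
    rw [hinl, range_inl_eq_ker_rightHom]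
    exact rightHom.normal_ker
  exact .of_zpowers_sup_zpowers (inl a) (inr b)
    (by rw [hinl, hinr, isComplement'_range_inl_range_inr.sup_eq_top])

theorem exists_mulEquiv_subgroup {A U : Type*} [Group A] [Group U] (hφ : Function.Injective φ)
    (e : N ≃* A) {ψ : U →* MulAut A} (hψ : Function.Bijective ψ) :
    ∃ C : Subgroup U, Nonempty (N ⋊[φ] K ≃* A ⋊[ψ.comp C.subtype] C) := by
  let Ψ := MulEquiv.ofBijective ψ hψ
  let χ : K →* U := Ψ.symm.toMonoidHom.comp ((MulAut.congr e).toMonoidHom.comp φ)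
  have hχ : Function.Injective χ := Ψ.symm.injective.comp ((MulAut.congr e).injective.comp hφ)
  refine ⟨χ.range, ⟨congr e (MonoidHom.ofInjective hχ) fun k => ?_⟩⟩
  ext n
  change e (φ k n) = ψ (Ψ.symm (MulAut.congr e (φ k))) (e n)
  rw [MulEquiv.ofBijective_apply_symm_apply]
  simp

end SemidirectProduct

theorem Nat.card_multiplicative_zmod (n : ℕ) : Nat.card (Multiplicative (ZMod n)) = n := by
  rw [Nat.card_congr Multiplicative.toAdd, Nat.card_zmod]

theorem unitAct_bijective (n : ℕ) : Function.Bijective (unitAct n) := by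
  have h : ⇑(unitAct n) = AddEquiv.toMultiplicative ∘ (ZMod.AddAutEquivUnits n).symm ∘
      Additive.ofMul := by
    ext u a
    rfl
  rw [h]
  exact AddEquiv.toMultiplicative.bijective.comp
    ((ZMod.AddAutEquivUnits n).symm.bijective.comp Additive.ofMul.bijective)

theorem IsPrimitiveGroup.exists_mulEquiv_of_isSupersolvableGroup {G : Type*} [Group G] [Finite G]
    (hprim : IsPrimitiveGroup G) (hss : IsSupersolvableGroup G) :
    ∃ (p : ℕ) (_ : p.Prime) (C : Subgroup (ZMod p)ˣ),
      Nonempty (G ≃* Multiplicative (ZMod p) ⋊[(unitAct p).comp C.subtype] C) := by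
  obtain ⟨M, hM, hcore⟩ := hprim
  have : Nontrivial G := by
    by_contra h
    rw [not_nontrivial_iff_subsingleton] at h
    exact hM.1 (Subsingleton.elim _ _)
  obtain ⟨N, hN, hp⟩ := hss.exists_normal_prime_card
  have := Fact.mk hp
  have hc := isComplement'_of_isCoatom hp hM hcore
  obtain ⟨C, ⟨e⟩⟩ := SemidirectProduct.exists_mulEquiv_subgroup
    (injective_normalizerMonoidHom_comp_inclusion hc.sup_eq_top hcore _)
    (mulEquivOfPrimeCardEq rfl (Nat.card_multiplicative_zmod _)) (unitAct_bijective _)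
  exact ⟨_, hp, C, ⟨(SemidirectProduct.mulEquivSubgroup hc).symm.trans e⟩⟩

/-- A finite group is primitive and supersolvable if and only if it is isomorphic to a
semidirect product `(ℤ/pℤ) ⋊ C` with `p` prime and `C ≤ Aut(ℤ/pℤ) ≅ (ℤ/pℤ)ˣ`. -/
theorem stmt5 (G : Type*) [Group G] [Finite G] :
    (IsPrimitiveGroup G ∧ IsSupersolvableGroup G) ↔
      ∃ (p : ℕ) (_ : p.Prime) (C : Subgroup (ZMod p)ˣ),
        Nonempty (G ≃* Multiplicative (ZMod p) ⋊[(unitAct p).comp C.subtype] C) := by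
  refine ⟨fun ⟨hprim, hss⟩ => hprim.exists_mulEquiv_of_isSupersolvableGroup hss, ?_⟩
  rintro ⟨p, hp, C, ⟨e⟩⟩
  have := Fact.mk hp
  have hφ : Function.Injective ((unitAct p).comp C.subtype) :=
    (unitAct_bijective p).1.comp Subtype.val_injective
  have hcard : (Nat.card (Multiplicative (ZMod p))).Prime := by
    rwa [Nat.card_multiplicative_zmod]
  exact ⟨(SemidirectProduct.isPrimitiveGroup hcard hφ).of_mulEquiv e.symm,
    .of_surjective (f := e.symm.toMonoidHom) e.symm.surjective
      SemidirectProduct.isSupersolvableGroup⟩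
end

section
/- Let G be a nontrivial group, H ≤ G, and let C be a nontrivial class of finite groups closed under taking quotients. Then HN = G for all normal subgroups N of G with G/N ∈ C if and only if HN = G for all normal subgroups N of G with G/N ∈ C and G/N primitive. -/
namespace Subgroup

variable {G Q : Type*} [Group G] [Group Q]

theorem isCoatom_comap_iff_of_surjective {f : G →* Q} (hf : Function.Surjective f)
    {M : Subgroup Q} : IsCoatom (M.comap f) ↔ IsCoatom M := by
  refine ⟨fun hM => ⟨fun h => hM.1 (by rw [h, comap_top]), fun X hX => ?_⟩,
    isCoatom_comap_of_surjective hf⟩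
  exact comap_injective hf (by rw [comap_top]; exact hM.2 _ ((comap_lt_comap_of_surjective hf).2 hX))

theorem exists_isCoatom_le_of_finite_quotient (N : Subgroup G) [N.Normal] [Finite (G ⧸ N)]
    {K : Subgroup G} (hNK : N ≤ K) (hK : K ≠ ⊤) : ∃ M, IsCoatom M ∧ K ≤ M := by
  have hker : (QuotientGroup.mk' N).ker ≤ K := by rwa [QuotientGroup.ker_mk']
  obtain ⟨M, hM, hKM⟩ := (eq_top_or_exists_le_coatom (K.map (QuotientGroup.mk' N))).resolve_left
    fun h => hK (by rw [← comap_map_eq_self hker, h, comap_top])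
  exact ⟨M.comap (QuotientGroup.mk' N),
    (isCoatom_comap_iff_of_surjective (QuotientGroup.mk'_surjective N)).2 hM,
    map_le_iff_le_comap.1 hKM⟩

theorem comap_map_mk'_normalCore (M : Subgroup G) :
    (M.map (QuotientGroup.mk' M.normalCore)).comap (QuotientGroup.mk' M.normalCore) = M :=
  comap_map_eq_self (by rw [QuotientGroup.ker_mk']; exact normalCore_le M)

theorem normalCore_map_mk'_normalCore (M : Subgroup G) :
    (M.map (QuotientGroup.mk' M.normalCore)).normalCore = ⊥ := by
  set π := QuotientGroup.mk' M.normalCore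
  have hcore : ((M.map π).normalCore).comap π ≤ M.normalCore :=
    normal_le_normalCore.mpr ((comap_mono (normalCore_le _)).trans (comap_map_mk'_normalCore M).le)
  rw [eq_bot_iff, ← map_comap_eq_self_of_surjective (QuotientGroup.mk'_surjective _) (normalCore _),
    ← QuotientGroup.map_mk'_self M.normalCore]
  exact map_mono hcore

theorem isPrimitiveGroup_quotient_normalCore {M : Subgroup G} (hM : IsCoatom M) :
    IsPrimitiveGroup (G ⧸ M.normalCore) := by
  refine ⟨_, (isCoatom_comap_iff_of_surjective (QuotientGroup.mk'_surjective _)).1 ?_,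
    normalCore_map_mk'_normalCore M⟩
  rwa [comap_map_mk'_normalCore]

end Subgroup

open Subgroup in
theorem stmt6_general {G : Type u} [Group G]
    (C : ∀ (K : Type u) [Group K], Prop)
    (hCfin : ∀ (K : Type u) [Group K], C K → Finite K)
    (hCquot : ∀ (K L : Type u) [Group K] [Group L] (f : K →* L),
      Function.Surjective f → C K → C L)
    (H : Subgroup G) :
    (∀ (N : Subgroup G) [N.Normal], C (G ⧸ N) → H ⊔ N = ⊤) ↔
      (∀ (N : Subgroup G) [N.Normal],
        C (G ⧸ N) → IsPrimitiveGroup (G ⧸ N) → H ⊔ N = ⊤) := by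
  refine ⟨fun h N _ hC _ => h N hC, fun h N _ hC => ?_⟩
  have := hCfin _ hC
  by_contra hHN
  obtain ⟨M, hM, hHNM⟩ := exists_isCoatom_le_of_finite_quotient N le_sup_right hHN
  have hNM : N ≤ M.normalCore := normal_le_normalCore.mpr (le_sup_right.trans hHNM)
  have hCM : C (G ⧸ M.normalCore) :=
    hCquot _ _ (QuotientGroup.map N _ (MonoidHom.id G) hNM)
      (QuotientGroup.map_surjective_of_surjective _ _ _ QuotientGroup.mk_surjective hNM) hC
  have hHM : H ⊔ M.normalCore = ⊤ := h _ hCM (isPrimitiveGroup_quotient_normalCore hM)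
  exact hM.1 (top_le_iff.mp (hHM ▸ sup_le (le_sup_left.trans hHNM) (normalCore_le M)))

/-- Let `G` be a nontrivial group, `H ≤ G`, and `C` a nontrivial class of finite groups
closed under quotients. Then `HN = G` for all normal `N` with `G/N ∈ C` iff `HN = G`
for all normal `N` with `G/N ∈ C` primitive. -/
theorem stmt6 {G : Type u} [Group G] [Nontrivial G]
    (C : ∀ (K : Type u) [Group K], Prop)
    (hCfin : ∀ (K : Type u) [Group K], C K → Finite K)
    (hCnontriv : ∃ (K : Type u) (_ : Group K), C K ∧ Nontrivial K)
    (hCquot : ∀ (K L : Type u) [Group K] [Group L] (f : K →* L),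
      Function.Surjective f → C K → C L)
    (H : Subgroup G) :
    (∀ (N : Subgroup G) [N.Normal], C (G ⧸ N) → H ⊔ N = ⊤) ↔
      (∀ (N : Subgroup G) [N.Normal],
        C (G ⧸ N) → IsPrimitiveGroup (G ⧸ N) → H ⊔ N = ⊤) :=
  stmt6_general C hCfin hCquot H
end

section
/- (Gaschütz) Let π : G → K be a surjective homomorphism of finite groups, let m ≥ d(G), and let (k_1,...,k_m) be a generating tuple for K. Then there exists a generating tuple (g_1,...,g_m) for G with π(g_i) = k_i for all i. -/
/-!
For a generating tuple `k` of `K`, the number of tuples lifting `k` that generate `G` does not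
depend on `k`. Indeed, the lifts of `k` form a fibre of the homomorphism `G^ι → K^ι`, so their
number does not depend on `k`; sort them by the subgroup `H` they generate. For `H ≠ ⊤` the lifts
generating `H` are the generating lifts of `k` along `π|_H` if `π(H) = K`, and there are none
otherwise, so by induction on `|G|` their number does not depend on `k` either. The tuple
`π ∘ g₀` of a generating tuple `g₀` of `G` has a generating lift, hence so does every `k`.
-/

open Subgroup Set Function

theorem MonoidHom.card_preimage_singleton_eq {G M : Type*} [Group G] [Group M] (f : G →* M)
    {x y : M} (hx : x ∈ f.range) (hy : y ∈ f.range) :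
    Nat.card (f ⁻¹' {x}) = Nat.card (f ⁻¹' {y}) := by
  obtain ⟨a, rfl⟩ := hx
  obtain ⟨b, rfl⟩ := hy
  exact Nat.card_congr <| (Equiv.mulRight (a⁻¹ * b)).subtypeEquiv fun g => by
    simp [mul_inv_eq_iff_eq_mul]

theorem Finset.exists_fin_subset_range {α : Type*} [Nonempty α] {m : ℕ} (T : Finset α)
    (hT : T.card ≤ m) : ∃ g : Fin m → α, (T : Set α) ⊆ Set.range g := by
  classical
  inhabit α
  refine ⟨fun i => if h : (i : ℕ) < T.card then T.equivFin.symm ⟨i, h⟩ else default, ?_⟩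
  intro t ht
  refine ⟨Fin.castLE hT (T.equivFin ⟨t, ht⟩), ?_⟩
  simp

theorem Subgroup.closure_range_subtype_comp_eq_iff {G ι : Type*} [Group G] (H : Subgroup G)
    (h : ι → H) :
    closure (range (H.subtype ∘ h)) = H ↔ closure (range h) = ⊤ := by
  rw [← (map_injective H.subtype_injective).eq_iff, MonoidHom.map_closure, ← range_comp,
    ← MonoidHom.range_eq_map, range_subtype]

section

variable {G K ι : Type*} [Group G] [Group K]

def liftsGenerating (π : G →* K) (k : ι → K) (H : Subgroup G) : Set (ι → G) :=
  {g | π ∘ g = k ∧ closure (range g) = H}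

theorem map_eq_closure_of_mem_liftsGenerating {π : G →* K} {k : ι → K} {H : Subgroup G}
    {g : ι → G} (hg : g ∈ liftsGenerating π k H) : H.map π = closure (range k) := by
  rw [← hg.1, ← hg.2, MonoidHom.map_closure, range_comp]

def liftsGeneratingEquiv (π : G →* K) (k : ι → K) (H : Subgroup G) :
    liftsGenerating π k H ≃ liftsGenerating (π.comp H.subtype) k ⊤ where
  toFun g := ⟨fun i => ⟨g.1 i, g.2.2.le (subset_closure (mem_range_self i))⟩, g.2.1,
    (H.closure_range_subtype_comp_eq_iff _).mp g.2.2⟩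
  invFun h := ⟨H.subtype ∘ h.1, h.2.1, (H.closure_range_subtype_comp_eq_iff _).mpr h.2.2⟩
  left_inv _ := rfl
  right_inv _ := rfl

theorem card_preimage_compLeft_eq_sum [Finite G] [Finite ι] [Fintype (Subgroup G)]
    (π : G →* K) (k : ι → K) :
    Nat.card (π.compLeft ι ⁻¹' {k}) = ∑ H : Subgroup G, Nat.card (liftsGenerating π k H) := by
  rw [← Nat.card_sigma]
  refine Nat.card_congr <| (Equiv.sigmaFiberEquiv fun g : π.compLeft ι ⁻¹' {k} =>
    closure (range g.1)).symm.trans (Equiv.sigmaCongrRight fun H => ?_)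
  exact Equiv.subtypeSubtypeEquivSubtypeInter (· ∈ π.compLeft ι ⁻¹' {k})
    (fun g => closure (range g) = H)

theorem card_liftsGenerating_top_eq [Finite G] [Finite ι] {π : G →* K} (hπ : Surjective π)
    {k k' : ι → K} (hk : closure (range k) = ⊤) (hk' : closure (range k') = ⊤) :
    Nat.card (liftsGenerating π k ⊤) = Nat.card (liftsGenerating π k' ⊤) := by
  induction hn : Nat.card G using Nat.strong_induction_on generalizing G with
  | _ n ih =>
  classical
  let : Fintype (Subgroup G) := Fintype.ofFinite _
  have hproper : ∀ H : Subgroup G, H ≠ ⊤ →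
      Nat.card (liftsGenerating π k H) = Nat.card (liftsGenerating π k' H) := by
    intro H hH
    by_cases hmap : H.map π = ⊤
    · have hsurj : Surjective (π.comp H.subtype) := by
        rw [← MonoidHom.range_eq_top, MonoidHom.range_comp, range_subtype, hmap]
      rw [Nat.card_congr (liftsGeneratingEquiv π k H),
        Nat.card_congr (liftsGeneratingEquiv π k' H)]
      exact ih _ (hn ▸ H.card_le_card_group.lt_of_ne (mt H.eq_top_of_card_eq hH)) hsurj rfl
    · have hempty : ∀ c : ι → K, closure (range c) = ⊤ → liftsGenerating π c H = ∅ :=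
        fun c hc => eq_empty_of_forall_notMem fun g hg =>
          hmap (map_eq_closure_of_mem_liftsGenerating hg ▸ hc)
      rw [hempty k hk, hempty k' hk']
  have htotal :
      ∑ H, Nat.card (liftsGenerating π k H) = ∑ H, Nat.card (liftsGenerating π k' H) := by
    rw [← card_preimage_compLeft_eq_sum, ← card_preimage_compLeft_eq_sum]
    exact (π.compLeft ι).card_preimage_singleton_eq (hπ.comp_left k) (hπ.comp_left k')
  rw [Fintype.sum_eq_add_sum_compl ⊤, Fintype.sum_eq_add_sum_compl ⊤,
    Finset.sum_congr rfl fun H hH => hproper H (by simpa using hH)] at htotal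
  exact Nat.add_right_cancel htotal

theorem exists_mem_liftsGenerating_top [Finite G] [Finite ι] {π : G →* K} (hπ : Surjective π)
    {k : ι → K} (hk : closure (range k) = ⊤) {g₀ : ι → G} (hg₀ : closure (range g₀) = ⊤) :
    (liftsGenerating π k ⊤).Nonempty := by
  have hπg₀ : closure (range (π ∘ g₀)) = ⊤ := by
    rw [range_comp, ← MonoidHom.map_closure, hg₀, ← MonoidHom.range_eq_map,
      MonoidHom.range_eq_top.mpr hπ]
  have : Nonempty (liftsGenerating π (π ∘ g₀) ⊤) := ⟨⟨g₀, rfl, hg₀⟩⟩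
  have hpos : 0 < Nat.card (liftsGenerating π k ⊤) :=
    card_liftsGenerating_top_eq hπ hπg₀ hk ▸ Nat.card_pos
  exact nonempty_coe_sort.mp (Nat.card_pos_iff.mp hpos).1

end

theorem stmt15_general {G K : Type*} [Group G] [Finite G] [Group K]
    (π : G →* K) (hπ : Function.Surjective π) (m : ℕ)
    (hm : ∃ T : Finset G, T.card ≤ m ∧ Subgroup.closure (T : Set G) = ⊤)
    (k : Fin m → K) (hk : Subgroup.closure (Set.range k) = ⊤) :
    ∃ g : Fin m → G, Subgroup.closure (Set.range g) = ⊤ ∧ ∀ i, π (g i) = k i := by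
  obtain ⟨T, hTm, hT⟩ := hm
  obtain ⟨g₀, hTg₀⟩ := T.exists_fin_subset_range hTm
  have hg₀ : closure (range g₀) = ⊤ := top_le_iff.mp (hT ▸ closure_mono hTg₀)
  obtain ⟨g, hgk, hg⟩ := exists_mem_liftsGenerating_top hπ hk hg₀
  exact ⟨g, hg, congrFun hgk⟩

/-- Gaschütz's lemma: if `π : G → K` is a surjective homomorphism of finite groups,
`m ≥ d(G)` (i.e. `G` has a generating set of size at most `m`), and `(k₁,…,k_m)` is a
generating tuple of `K`, then there is a generating tuple `(g₁,…,g_m)` of `G` with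
`π(gᵢ) = kᵢ` for all `i`. -/
theorem stmt15 {G K : Type*} [Group G] [Finite G] [Group K] [Finite K]
    (π : G →* K) (hπ : Function.Surjective π) (m : ℕ)
    (hm : ∃ T : Finset G, T.card ≤ m ∧ Subgroup.closure (T : Set G) = ⊤)
    (k : Fin m → K) (hk : Subgroup.closure (Set.range k) = ⊤) :
    ∃ g : Fin m → G, Subgroup.closure (Set.range g) = ⊤ ∧ ∀ i, π (g i) = k i :=
  stmt15_general π hπ m hm k hk
end

section
/- Let J = {f_1,...,f_m} ⊂ ℤ[X_1,...,X_n]. If S(J), the set of primes p for which f_1,...,f_m have a common root modulo p, is finite, then there exist an integer a ≠ 0 and polynomials ℓ_1,...,ℓ_m ∈ ℤ[X_1,...,X_n] with Σ f_i ℓ_i = a; moreover every prime in S(J) divides a. -/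
/-!
If the `fᵢ` generated a proper ideal of `ℚ[X₁,…,Xₙ]`, a maximal ideal above it would give, by
Zariski's lemma, a common zero `x` in a number field `K`. Write `K = ℚ(θ)` with `θ` an algebraic
integer and `N • xⱼ = Qⱼ(θ)` with `Qⱼ ∈ ℤ[T]`; then each `N ^ d fᵢ(Q(T) / N)` is an integer
polynomial divisible by the minimal polynomial `G` of `θ`. By Schur's theorem `G` has a root `t`
modulo infinitely many primes `p`, and for `p ∤ N` the point `Q(t) / N` is a common zero of the
`fᵢ` modulo `p`. Hence `1 = Σ fᵢ cᵢ` over `ℚ`, and clearing denominators gives `Σ fᵢ ℓᵢ = a`;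
reducing this identity modulo a prime of `S(J)` at a common zero shows that the prime divides `a`.
-/

def commonZeroPrimes {σ ι : Type*} (f : ι → MvPolynomial σ ℤ) : Set ℕ :=
  {p : ℕ | p.Prime ∧ ∃ x : σ → ZMod p,
    ∀ i, MvPolynomial.eval x (MvPolynomial.map (Int.castRingHom (ZMod p)) (f i)) = 0}

namespace Polynomial

theorem infinite_setOf_prime_exists_aeval_eq_zero (G : ℤ[X]) (hG : 0 < G.natDegree) :
    {p : ℕ | p.Prime ∧ ∃ t : ZMod p, aeval t G = 0}.Infinite := by
  intro hfin
  have mem_of_dvd : ∀ (p : ℕ) (k : ℤ), p.Prime → (p : ℤ) ∣ G.eval k →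
      p ∈ {p : ℕ | p.Prime ∧ ∃ t : ZMod p, aeval t G = 0} := fun p k hp hdvd =>
    ⟨hp, k, by
      rw [← eq_intCast (algebraMap ℤ (ZMod p)), aeval_algebraMap_apply_eq_algebraMap_eval,
        eq_intCast, ZMod.intCast_zmod_eq_zero_iff_dvd]
      exact hdvd⟩
  set c := G.eval 0
  by_cases hc : c = 0
  · exact Nat.infinite_setOfPred_prime.mono
      (fun p hp => mem_of_dvd p 0 hp (by change (p : ℤ) ∣ c; rw [hc]; exact dvd_zero _)) hfin
  set P : ℤ := ∏ p ∈ hfin.toFinset, (p : ℤ)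
  have hP : P ≠ 0 := Finset.prod_ne_zero_iff.2 fun p hp => by
    exact_mod_cast ((hfin.mem_toFinset.1 hp).1).ne_zero
  -- `G` takes the values `±c` only finitely often, so some multiple `k` of `c ^ 2 P` avoids them;
  -- then `G k = c u` with `u ≡ 1 mod P` and `u ≠ ±1`, and a prime factor of `u` is a new prime.
  have hne : (G - C c) * (G + C c) ≠ 0 := by
    refine mul_ne_zero (fun h => ?_) (fun h => ?_)
    · have := congrArg natDegree (sub_eq_zero.1 h); rw [natDegree_C] at this; omega
    · have := congrArg natDegree (eq_neg_of_add_eq_zero_left h)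
      rw [← C_neg, natDegree_C] at this; omega
  obtain ⟨_, ⟨j, rfl⟩, hk⟩ := ((Set.infinite_range_of_injective
    (mul_right_injective₀ (by positivity : c * (c * P) ≠ 0))).sdiff
      (finite_setOfPred_isRoot hne)).nonempty
  obtain ⟨v, hv⟩ := sub_dvd_eval_sub (c * (c * P) * j) 0 G
  set u := 1 + c * P * j * v
  have hGk : G.eval (c * (c * P) * j) = c * u := by linear_combination hv
  have hu : u.natAbs ≠ 1 := by
    intro h
    rcases Int.natAbs_eq_iff.1 h with h | h <;> apply hk <;>
      simp [hGk, h, sub_eq_zero, add_eq_zero_iff_eq_neg]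
  obtain ⟨q, hq, hqu⟩ := Nat.exists_prime_and_dvd hu
  have hqP : (q : ℤ) ∣ P := Finset.dvd_prod_of_mem _ <| hfin.mem_toFinset.2 <|
    mem_of_dvd q _ hq (hGk ▸ dvd_mul_of_dvd_right (Int.natCast_dvd.2 hqu) c)
  have hq1 : (q : ℤ) ∣ 1 := by
    simpa [u] using dvd_sub (Int.natCast_dvd.2 hqu) (((hqP.mul_left c).mul_right j).mul_right v)
  exact hq.one_lt.ne' (by exact_mod_cast Int.eq_one_of_dvd_one (by positivity) hq1)

end Polynomial

namespace MvPolynomial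

variable {R σ : Type*}

theorem exists_C_mem_of_map_eq_top [CommRing R] {S : Type*} (M : Submonoid R) [CommRing S]
    [Algebra R S] [IsLocalization M S] {I : Ideal (MvPolynomial σ R)}
    (h : I.map (map (algebraMap R S)) = ⊤) : ∃ a ∈ M, C a ∈ I := by
  let := algebraMvPolynomial (σ := σ) (R := R) (S := S)
  obtain ⟨_, ⟨a, ha, rfl⟩, haI⟩ :=
    (IsLocalization.algebraMap_mem_map_algebraMap_iff (M.map C) (MvPolynomial σ S) I 1).1
      (by rw [map_one]; exact h ▸ Submodule.mem_top)
  exact ⟨a, ha, by simpa using haI⟩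

variable [CommSemiring R]

theorem exists_aeval_C_mul_X_eq (F : MvPolynomial σ R) (N : R) :
    ∃ (d : ℕ) (H : MvPolynomial σ R), aeval (fun j => C N * X j) H = C N ^ d * F := by
  induction F using MvPolynomial.induction_on with
  | C a => exact ⟨0, C a, by simp⟩
  | add F₁ F₂ h₁ h₂ =>
    obtain ⟨d₁, H₁, e₁⟩ := h₁
    obtain ⟨d₂, H₂, e₂⟩ := h₂
    refine ⟨d₁ + d₂, C (N ^ d₂) * H₁ + C (N ^ d₁) * H₂, ?_⟩
    simp only [map_add, map_mul, aeval_C, algebraMap_eq, e₁, e₂, map_pow]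
    ring
  | mul_X F i h =>
    obtain ⟨d, H, e⟩ := h
    refine ⟨d + 1, H * X i, ?_⟩
    simp only [map_mul, aeval_X, e]
    ring

theorem aeval_smul_eq_of_aeval_C_mul_X_eq {A : Type*} [CommSemiring A] [Algebra R A]
    {F H : MvPolynomial σ R} {N : R} {d : ℕ} (hH : aeval (fun j => C N * X j) H = C N ^ d * F)
    (u : σ → A) : aeval (fun j => N • u j) H = N ^ d • aeval u F := by
  have := congrArg (aeval u) hH
  rw [comp_aeval_apply] at this
  simpa [Algebra.smul_def] using this

end MvPolynomial

section PrimitiveElement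

open Polynomial

theorem exists_isIntegral_adjoin_eq_top (R : Type*) {F K : Type*} [CommRing R] [IsDomain R]
    [Field F] [Algebra R F] [IsFractionRing R F] [Field K] [Algebra F K] [Algebra R K]
    [IsScalarTower R F K] [FiniteDimensional F K] [Algebra.IsSeparable F K] :
    ∃ θ : K, IsIntegral R θ ∧ Algebra.adjoin F {θ} = ⊤ := by
  obtain ⟨θ₀, hθ₀⟩ := Field.exists_primitive_element F K
  have halg : IsAlgebraic R θ₀ := (IsFractionRing.isAlgebraic_iff R F K).2 (.of_finite F θ₀)
  obtain ⟨y, hy, hint⟩ := halg.exists_integral_multiple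
  refine ⟨y • θ₀, hint, ?_⟩
  rw [← IntermediateField.adjoin_simple_toSubalgebra_of_isAlgebraic (.of_finite F _), eq_top_iff,
    ← IntermediateField.top_toSubalgebra, IntermediateField.toSubalgebra_le_toSubalgebra, ← hθ₀,
    IntermediateField.adjoin_simple_le_iff]
  have hy' : algebraMap R F y ≠ 0 := by
    simpa using (IsFractionRing.injective R F).ne hy
  have hθ₀y : θ₀ = (algebraMap R F y)⁻¹ • y • θ₀ := by
    rw [← algebraMap_smul F y θ₀, smul_smul, inv_mul_cancel₀ hy', one_smul]
  nth_rw 2 [hθ₀y]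
  exact SMulMemClass.smul_mem _ (IntermediateField.mem_adjoin_simple_self F (y • θ₀))

theorem exists_aeval_eq_smul_of_adjoin_eq_top {R S A σ : Type*} [CommRing R] (M : Submonoid R)
    [CommRing S] [Algebra R S] [IsLocalization M S] [CommRing A] [Algebra R A] [Algebra S A]
    [IsScalarTower R S A] [Finite σ] {θ : A} (hθ : Algebra.adjoin S {θ} = ⊤) (x : σ → A) :
    ∃ b ∈ M, ∃ Q : σ → R[X], ∀ j, aeval θ (Q j) = b • x j := by
  have hx : ∀ j, ∃ q : S[X], aeval θ q = x j := fun j => by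
    have := hθ ▸ Algebra.mem_top (x := x j)
    rwa [Algebra.adjoin_singleton_eq_range_aeval] at this
  choose q hq using hx
  let := Polynomial.algebra R S
  have := Polynomial.isLocalization M S
  obtain ⟨⟨_, b, hb, rfl⟩, hbq⟩ := IsLocalization.exist_integer_multiples_of_finite (M.map C) q
  choose Q hQ using hbq
  refine ⟨b, hb, Q, fun j => ?_⟩
  have hQj : (Q j).map (algebraMap R S) = C (algebraMap R S b) * q j := by
    simpa [Algebra.smul_def] using hQ j
  rw [← aeval_map_algebraMap S, ← hq j, hQj, map_mul, aeval_C, ← IsScalarTower.algebraMap_apply,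
    Algebra.smul_def]

theorem infinite_commonZeroPrimes_of_aeval_eq_zero {σ ι K : Type*} [Finite σ] [Field K]
    [Algebra ℚ K] [FiniteDimensional ℚ K] (f : ι → MvPolynomial σ ℤ) (x : σ → K)
    (hx : ∀ i, MvPolynomial.aeval x (f i) = 0) : (commonZeroPrimes f).Infinite := by
  have : CharZero K := charZero_of_injective_algebraMap (algebraMap ℚ K).injective
  obtain ⟨θ, hθint, hθ⟩ := exists_isIntegral_adjoin_eq_top ℤ (F := ℚ) (K := K)
  obtain ⟨N, hN, Q, hQ⟩ := exists_aeval_eq_smul_of_adjoin_eq_top (nonZeroDivisors ℤ) hθ x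
  choose d H hH using fun i => (f i).exists_aeval_C_mul_X_eq N
  -- `H i (Q)` is the integer polynomial `N ^ d i * f i (Q / N)`, which vanishes at `θ`.
  have hGW : ∀ i, minpoly ℤ θ ∣ MvPolynomial.aeval Q (H i) := fun i =>
    minpoly.isIntegrallyClosed_dvd hθint <| by
      simp only [MvPolynomial.comp_aeval_apply, hQ]
      rw [MvPolynomial.aeval_smul_eq_of_aeval_C_mul_X_eq (hH i), hx i, smul_zero]
  have hfinN : {p : ℕ | (N : ZMod p) = 0}.Finite := by
    refine (Nat.divisors N.natAbs).finite_toSet.subset fun p hp => ?_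
    exact Nat.mem_divisors.2 ⟨Int.natCast_dvd.1 ((ZMod.intCast_zmod_eq_zero_iff_dvd N p).1 hp),
      Int.natAbs_ne_zero.2 (nonZeroDivisors.ne_zero hN)⟩
  refine (((minpoly ℤ θ).infinite_setOf_prime_exists_aeval_eq_zero
    (minpoly.natDegree_pos hθint)).sdiff hfinN).mono ?_
  rintro p ⟨⟨hp, t, ht⟩, hNp⟩
  have : Fact p.Prime := ⟨hp⟩
  refine ⟨hp, fun j => (N : ZMod p)⁻¹ * aeval t (Q j), fun i => ?_⟩
  obtain ⟨W, hW⟩ := hGW i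
  have key := congrArg (aeval t) hW
  rw [map_mul, ht, zero_mul, MvPolynomial.comp_aeval_apply] at key
  have hu : ∀ j, aeval t (Q j) = N • ((N : ZMod p)⁻¹ * aeval t (Q j)) := fun j => by
    rw [zsmul_eq_mul, mul_inv_cancel_left₀ hNp]
  rw [funext hu, MvPolynomial.aeval_smul_eq_of_aeval_C_mul_X_eq (hH i), zsmul_eq_mul] at key
  rw [MvPolynomial.eval_map, ← algebraMap_int_eq, ← MvPolynomial.aeval_def]
  exact (mul_eq_zero.1 key).resolve_left (by simpa using pow_ne_zero (d i) hNp)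

end PrimitiveElement

theorem map_span_eq_top_of_finite_commonZeroPrimes {σ ι : Type*} [Finite σ]
    (f : ι → MvPolynomial σ ℤ) (hf : (commonZeroPrimes f).Finite) :
    (Ideal.span (Set.range f)).map (MvPolynomial.map (algebraMap ℤ ℚ)) = ⊤ := by
  by_contra h
  obtain ⟨M, hM, hle⟩ := Ideal.exists_le_maximal _ h
  let := Ideal.Quotient.field M
  have : Module.Finite ℚ (MvPolynomial σ ℚ ⧸ M) := finite_of_finite_type_of_isJacobsonRing _ _
  have hmk : ∀ F : MvPolynomial σ ℤ, MvPolynomial.aeval (fun j => Ideal.Quotient.mk M (.X j)) F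
      = Ideal.Quotient.mk M (MvPolynomial.map (algebraMap ℤ ℚ) F) := fun F => by
    induction F using MvPolynomial.induction_on <;> simp_all
  refine infinite_commonZeroPrimes_of_aeval_eq_zero f (fun j => Ideal.Quotient.mk M (.X j))
    (fun i => (hmk (f i)).trans ?_) hf
  rw [Ideal.Quotient.eq_zero_iff_mem]
  exact hle (Ideal.mem_map_of_mem _ (Ideal.subset_span ⟨i, rfl⟩))

theorem natCast_dvd_of_mem_commonZeroPrimes {σ ι : Type*} [Fintype ι]
    {f ℓ : ι → MvPolynomial σ ℤ} {a : ℤ} (h : ∑ i, f i * ℓ i = MvPolynomial.C a) {p : ℕ}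
    (hp : p ∈ commonZeroPrimes f) : (p : ℤ) ∣ a := by
  obtain ⟨-, x, hx⟩ := hp
  rw [← ZMod.intCast_zmod_eq_zero_iff_dvd]
  simpa [hx] using (congrArg
    (fun g => MvPolynomial.eval x (MvPolynomial.map (Int.castRingHom (ZMod p)) g)) h).symm

theorem stmt16_general (m n : ℕ)
    (f : Fin m → MvPolynomial (Fin n) ℤ)
    (hfin : {p : ℕ | p.Prime ∧ ∃ x : Fin n → ZMod p,
        ∀ i, MvPolynomial.eval x
          (MvPolynomial.map (Int.castRingHom (ZMod p)) (f i)) = 0}.Finite) :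
    ∃ (a : ℤ) (ℓ : Fin m → MvPolynomial (Fin n) ℤ), a ≠ 0 ∧
      (∑ i, f i * ℓ i) = MvPolynomial.C a ∧
      ∀ p ∈ {p : ℕ | p.Prime ∧ ∃ x : Fin n → ZMod p,
        ∀ i, MvPolynomial.eval x
          (MvPolynomial.map (Int.castRingHom (ZMod p)) (f i)) = 0}, (p : ℤ) ∣ a := by
  obtain ⟨a, ha, haI⟩ := MvPolynomial.exists_C_mem_of_map_eq_top (nonZeroDivisors ℤ) (S := ℚ)
    (map_span_eq_top_of_finite_commonZeroPrimes f hfin)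
  obtain ⟨ℓ, hℓ⟩ := Ideal.mem_span_range_iff_exists_fun.1 haI
  have hsum : ∑ i, f i * ℓ i = MvPolynomial.C a := by simpa only [mul_comm] using hℓ
  exact ⟨a, ℓ, nonZeroDivisors.ne_zero ha, hsum,
    fun p hp => natCast_dvd_of_mem_commonZeroPrimes hsum hp⟩

/-- If the set of primes `p` for which `f₁,…,f_m ∈ ℤ[X₁,…,X_n]` have a common root
modulo `p` is finite, then there are a nonzero integer `a` and polynomials `ℓᵢ` with
`Σ fᵢ ℓᵢ = a`, and every prime in the set divides `a`. -/
theorem stmt16 (m n : ℕ) (hm : 1 ≤ m) (hn : 1 ≤ n)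
    (f : Fin m → MvPolynomial (Fin n) ℤ)
    (hfin : {p : ℕ | p.Prime ∧ ∃ x : Fin n → ZMod p,
        ∀ i, MvPolynomial.eval x
          (MvPolynomial.map (Int.castRingHom (ZMod p)) (f i)) = 0}.Finite) :
    ∃ (a : ℤ) (ℓ : Fin m → MvPolynomial (Fin n) ℤ), a ≠ 0 ∧
      (∑ i, f i * ℓ i) = MvPolynomial.C a ∧
      ∀ p ∈ {p : ℕ | p.Prime ∧ ∃ x : Fin n → ZMod p,
        ∀ i, MvPolynomial.eval x
          (MvPolynomial.map (Int.castRingHom (ZMod p)) (f i)) = 0}, (p : ℤ) ∣ a :=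
  stmt16_general m n f hfin
end
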